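/- arXiv:1509.08879 — 2 statements merged into one kernel-verified Lean document; each statement's English description precedes it below -/
import Mathlib

section
/- Let ℓ ≥ 1 and let λ_{1,1}, …, λ_{ℓ,1} be nonzero real numbers; set μ₀ = 1, μ_m = ∏_{j=1}^{m} λ_{j,1}, and λ_{m,n} = μ_m/(μ_{n−1} μ_{m−n}) for 1 ≤ n ≤ m ≤ ℓ. On the chain of N sites (periodic boundary conditions or special boundary conditions s = (c₁,c_N)), let M : V_N → V_N be the invertible diagonal linear map M e_σ = (∏_{k=1}^{ℓ} μ_k^{−m_k(σ)}) e_σ, where m_k(σ) is the number of clusters of length k in σ. Then M Q_λ M^{−1} = Q, the unit-coupling supercharge (all amplitudes equal to 1). In particular, dim ker(Q_λ restricted to fermion number f)/im(Q_λ) = dim H_Q^f for every f. -/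
attribute [local instance 10] Classical.propDecidable

noncomputable section

/-- A configuration of `N` sites: `true` = occupied, `false` = empty. -/
abbrev Config (N : ℕ) := Fin N → Bool

/-- Extension of a configuration to all of `ℕ`, by empty sites outside the chain. -/
def extc {N : ℕ} (σ : Config N) (t : ℕ) : Bool :=
  if h : t < N then σ ⟨t, h⟩ else false

/-- The fermion number: the number of occupied sites. -/
def fermions {N : ℕ} (σ : Config N) : ℕ :=
  (Finset.univ.filter fun i => σ i = true).card

/-- Allowed configurations of the open chain of `N` sites with exclusion parameter `ℓ`
and special boundary conditions `(c₁, cN)`: no cluster is longer than `ℓ`, the cluster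
containing the first site (if occupied) has length at most `c₁`, and the cluster
containing the last site (if occupied) has length at most `cN`. -/
def OpenOK (N ℓ c₁ cN : ℕ) (σ : Config N) : Prop :=
  (∀ a : ℕ, ¬ ∀ k ≤ ℓ, extc σ (a + k) = true) ∧
  (¬ (c₁ + 1 ≤ N ∧ ∀ k ≤ c₁, extc σ k = true)) ∧
  (¬ (cN + 1 ≤ N ∧ ∀ k ≤ cN, extc σ (N - 1 - k) = true))

/-- Cyclic shift of a site of the closed chain by `k` steps. -/
def cyc {N : ℕ} (i : Fin N) (k : ℕ) : Fin N :=
  ⟨(i.1 + k) % N, Nat.mod_lt _ i.pos⟩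

/-- Allowed configurations of the closed chain of `N` sites with periodic boundary
conditions: the chain is not fully occupied and no maximal cyclic run of occupied
sites is longer than `ℓ`. -/
def PerOK (N ℓ : ℕ) (σ : Config N) : Prop :=
  ∀ i : Fin N, ∃ k ≤ ℓ, σ (cyc i k) = false

/-- The fermionic sign `(-1)^{#{j < i : σ j = 1}}`. -/
def sgn {N : ℕ} (σ : Config N) (i : Fin N) : ℂ :=
  (-1 : ℂ) ^ ((Finset.univ.filter fun j => j < i ∧ σ j = true).card)

/-- The Hilbert space `V_N`: complex functions on allowed configurations. -/
abbrev AState (N : ℕ) (OK : Config N → Prop) := {σ : Config N // OK σ} → ℂ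

/-- Matrix of the supercharge with amplitudes `A`, with particle insertion
restricted to the sublattice `S`: the entry `(τ, σ)` is the amplitude (with fermionic
sign) for obtaining `τ` from `σ` by occupying an empty site of `S`. -/
def QmatA (N : ℕ) (OK : Config N → Prop) (S : Fin N → Prop)
    (A : Config N → Fin N → ℂ) :
    Matrix {σ : Config N // OK σ} {σ : Config N // OK σ} ℂ := fun τ σ =>
  ∑ i : Fin N,
    if S i ∧ σ.1 i = false ∧ τ.1 = Function.update σ.1 i true
    then A σ.1 i * sgn σ.1 i else 0

/-- The supercharge with amplitudes `A` restricted to the sublattice `S`, as a linear map. -/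
def QopA (N : ℕ) (OK : Config N → Prop) (S : Fin N → Prop)
    (A : Config N → Fin N → ℂ) : AState N OK →ₗ[ℂ] AState N OK :=
  (QmatA N OK S A).mulVecLin

/-- The unit-coupling supercharge restricted to the sublattice `S`. -/
def Qop (N : ℕ) (OK : Config N → Prop) (S : Fin N → Prop) :
    AState N OK →ₗ[ℂ] AState N OK :=
  QopA N OK S fun _ _ => 1

/-- The subspace `V_{N,f}` of states supported on configurations with fermion number `f`. -/
def gradeV (N : ℕ) (OK : Config N → Prop) (f : ℕ) :
    Submodule ℂ (AState N OK) where
  carrier := {ψ | ∀ σ, fermions σ.1 ≠ f → ψ σ = 0}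
  add_mem' := by
    intro a b ha hb σ h
    show a σ + b σ = 0
    rw [ha σ h, hb σ h, add_zero]
  zero_mem' := by intro σ h; rfl
  smul_mem' := by
    intro c a ha σ h
    show c * a σ = 0
    rw [ha σ h, mul_zero]

/-- Length of the run of occupied sites immediately to the left of site `i` (open chain). -/
def lrunO {N : ℕ} (σ : Config N) (i : Fin N) : ℕ :=
  ((Finset.range N).filter fun r =>
    1 ≤ r ∧ r ≤ i.1 ∧ ∀ k, 1 ≤ k → k ≤ r → extc σ (i.1 - k) = true).card

/-- Length of the run of occupied sites immediately to the right of site `i` (open chain). -/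
def rrunO {N : ℕ} (σ : Config N) (i : Fin N) : ℕ :=
  ((Finset.range N).filter fun r =>
    1 ≤ r ∧ ∀ k, 1 ≤ k → k ≤ r → extc σ (i.1 + k) = true).card

/-- The amplitude `λ_{m(i,σ),n(i,σ)}` for inserting a particle at site `i` of the open
chain: after insertion, `i` is the `n`-th member of an `m`-cluster, with
`m = lrun + rrun + 1` and `n = lrun + 1`. -/
def AmpO {N : ℕ} (lam : ℕ → ℕ → ℝ) (σ : Config N) (i : Fin N) : ℂ :=
  ((lam (lrunO σ i + rrunO σ i + 1) (lrunO σ i + 1) : ℝ) : ℂ)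

/-- Length of the cyclic run of occupied sites immediately to the left of site `i`. -/
def lrunP {N : ℕ} (σ : Config N) (i : Fin N) : ℕ :=
  ((Finset.range N).filter fun r =>
    1 ≤ r ∧ ∀ k, 1 ≤ k → k ≤ r → σ (cyc i (N - k)) = true).card

/-- Length of the cyclic run of occupied sites immediately to the right of site `i`. -/
def rrunP {N : ℕ} (σ : Config N) (i : Fin N) : ℕ :=
  ((Finset.range N).filter fun r =>
    1 ≤ r ∧ ∀ k, 1 ≤ k → k ≤ r → σ (cyc i k) = true).card

/-- The amplitude `λ_{m(i,σ),n(i,σ)}` for inserting a particle at site `i` of the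
closed (periodic) chain. -/
def AmpP {N : ℕ} (lam : ℕ → ℕ → ℝ) (σ : Config N) (i : Fin N) : ℂ :=
  ((lam (lrunP σ i + rrunP σ i + 1) (lrunP σ i + 1) : ℝ) : ℂ)

/-- `μ_m = ∏_{j=1}^m λ_{j,1}` (so `μ₀ = 1`). -/
def muProd (lam1 : ℕ → ℝ) (m : ℕ) : ℝ := ∏ j ∈ Finset.Icc 1 m, lam1 j

/-- `λ_{m,n} = μ_m / (μ_{n-1} μ_{m-n})`. -/
def lamGen (lam1 : ℕ → ℝ) (m n : ℕ) : ℝ :=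
  muProd lam1 m / (muProd lam1 (n - 1) * muProd lam1 (m - n))

/-- The number of clusters of length exactly `k ≥ 1` in a configuration of the open chain. -/
def clustO (N : ℕ) (σ : Config N) (k : ℕ) : ℕ :=
  ((Finset.range N).filter fun j =>
    (j = 0 ∨ extc σ (j - 1) = false) ∧ (∀ t < k, extc σ (j + t) = true) ∧
      extc σ (j + k) = false).card

/-- The number of cyclic clusters of length exactly `k ≥ 1` in a configuration of the
closed chain. -/
def clustP (N : ℕ) (σ : Config N) (k : ℕ) : ℕ :=
  (Finset.univ.filter fun j : Fin N =>
    σ (cyc j (N - 1)) = false ∧ (∀ t < k, σ (cyc j t) = true) ∧ σ (cyc j k) = false).card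

/-- The diagonal entry `∏_{k=1}^ℓ μ_k^{-m_k(σ)}` of `M` (open chain). -/
def diagO (ℓ N : ℕ) (lam1 : ℕ → ℝ) (σ : Config N) : ℂ :=
  ∏ k ∈ Finset.Icc 1 ℓ, ((muProd lam1 k : ℝ) : ℂ) ^ (-(clustO N σ k : ℤ))

/-- The diagonal entry `∏_{k=1}^ℓ μ_k^{-m_k(σ)}` of `M` (closed chain). -/
def diagP (ℓ N : ℕ) (lam1 : ℕ → ℝ) (σ : Config N) : ℂ :=
  ∏ k ∈ Finset.Icc 1 ℓ, ((muProd lam1 k : ℝ) : ℂ) ^ (-(clustP N σ k : ℤ))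

/-- Cocycles at grade `f` for the supercharge with amplitudes `A`. -/
def cocyclesA (N : ℕ) (OK : Config N → Prop) (A : Config N → Fin N → ℂ) (f : ℕ) :
    Submodule ℂ (AState N OK) :=
  LinearMap.ker (QopA N OK (fun _ => True) A) ⊓ gradeV N OK f

/-- Coboundaries at grade `f` for the supercharge with amplitudes `A`. -/
def coboundsA (N : ℕ) (OK : Config N → Prop) (A : Config N → Fin N → ℂ) (f : ℕ) :
    Submodule ℂ (AState N OK) :=
  (gradeV N OK (f - 1)).map (QopA N OK (fun _ => True) A)

/-- The cohomology at grade `f` for the supercharge with amplitudes `A`. -/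
abbrev CohSpaceA (N : ℕ) (OK : Config N → Prop) (A : Config N → Fin N → ℂ) (f : ℕ) :=
  cocyclesA N OK A f ⧸ ((coboundsA N OK A f).comap (cocyclesA N OK A f).subtype)

/-- The dimension of the cohomology at grade `f` for the supercharge with amplitudes `A`. -/
def cohDimA (N : ℕ) (OK : Config N → Prop) (A : Config N → Fin N → ℂ) (f : ℕ) : ℕ :=
  Module.finrank ℂ (CohSpaceA N OK A f)

/-!
Occupying an empty site `i` whose neighbouring runs have lengths `a` (to the left) and `b`
(to the right) merges them into one cluster of length `a + b + 1`; all other clusters are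
unchanged. So the weight `∏ μ_k^{-m_k}` of the configuration gets multiplied by
`μ_a μ_b / μ_{a+b+1} = 1 / λ_{a+b+1,a+1}` (`μ_0 = 1` takes care of empty neighbouring runs),
and every nonzero entry of `M Q_λ M⁻¹` is `1`. Being diagonal, `M` preserves fermion number,
so it carries cocycles and coboundaries of `Q_λ` onto those of `Q`. The periodic chain is
reduced to the open one by cutting the ring just after an empty site of the target
configuration.
-/

open Finset

theorem Finset.filter_range_eq_Icc_one_card {N : ℕ} {P : ℕ → Prop} [DecidablePred P]
    (h0 : ¬ P 0) (hdown : ∀ r r', P r → 1 ≤ r' → r' ≤ r → P r') :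
    (range N).filter P = Icc 1 #((range N).filter P) := by
  set S := (range N).filter P
  rcases S.eq_empty_or_nonempty with hS | hS
  · simp [hS]
  have hmax := mem_filter.1 (S.max'_mem hS)
  have hS_eq : S = Icc 1 (S.max' hS) := by
    ext r
    rw [mem_Icc]
    constructor
    · intro hr
      refine ⟨Nat.one_le_iff_ne_zero.2 ?_, S.le_max' r hr⟩
      rintro rfl
      exact h0 (mem_filter.1 hr).2
    · rintro ⟨h1, h2⟩
      exact mem_filter.2 ⟨mem_range.2 ((h2.trans_lt (mem_range.1 hmax.1))),
        hdown _ _ hmax.2 h1 h2⟩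
  rw [hS_eq, Nat.card_Icc, Nat.add_sub_cancel]

theorem Finset.iff_le_card_filter_range {N : ℕ} {P : ℕ → Prop} [DecidablePred P]
    (h0 : ¬ P 0) (hdown : ∀ r r', P r → 1 ≤ r' → r' ≤ r → P r') (hN : ∀ r, P r → r < N)
    (r : ℕ) : P r ↔ 1 ≤ r ∧ r ≤ #((range N).filter P) := by
  rw [← mem_Icc, ← filter_range_eq_Icc_one_card h0 hdown, mem_filter, mem_range]
  exact ⟨fun h => ⟨hN r h, h⟩, And.right⟩

theorem Finset.card_filter_inter_pair {α : Type*} [DecidableEq α] (s : Finset α)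
    (P : α → Prop) [DecidablePred P] {L R : α} (hLR : L ≠ R) :
    #((s.filter P) ∩ {L, R}) =
      (if L ∈ s ∧ P L then 1 else 0) + (if R ∈ s ∧ P R then 1 else 0) := by
  rw [← sum_pair (f := fun j => if j ∈ s ∧ P j then 1 else 0) hLR, ← card_filter]
  congr 1
  ext j
  simp only [mem_inter, mem_filter, mem_insert, mem_singleton]
  tauto

theorem Finset.card_filter_add_eq_of_forall_ne {α : Type*} [DecidableEq α] (s : Finset α)
    {P Q : α → Prop} [DecidablePred P] [DecidablePred Q] {L R : α} (hLR : L ≠ R)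
    (hPQ : ∀ j, j ≠ L → j ≠ R → (P j ↔ Q j)) :
    #(s.filter P) + (if L ∈ s ∧ Q L then 1 else 0) + (if R ∈ s ∧ Q R then 1 else 0) =
      #(s.filter Q) + (if L ∈ s ∧ P L then 1 else 0) + (if R ∈ s ∧ P R then 1 else 0) := by
  have hsdiff : (s.filter P) \ {L, R} = (s.filter Q) \ {L, R} := by
    ext j
    simp only [mem_sdiff, mem_filter, mem_insert, mem_singleton, not_or]
    exact ⟨fun ⟨⟨hj, hP⟩, hL, hR⟩ => ⟨⟨hj, (hPQ j hL hR).1 hP⟩, hL, hR⟩,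
      fun ⟨⟨hj, hQ⟩, hL, hR⟩ => ⟨⟨hj, (hPQ j hL hR).2 hQ⟩, hL, hR⟩⟩
  have hP := card_sdiff_add_card_inter (s.filter P) {L, R}
  have hQ := card_sdiff_add_card_inter (s.filter Q) {L, R}
  rw [card_filter_inter_pair s P hLR] at hP
  rw [card_filter_inter_pair s Q hLR, ← hsdiff] at hQ
  omega

section OpenRuns

variable {N : ℕ} (σ : Config N) (i : Fin N)

theorem lt_of_extc_eq_true {t : ℕ} (h : extc σ t = true) : t < N := by
  by_contra h'
  simp [extc, h'] at h

theorem extc_val : extc σ i.1 = σ i := by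
  simp [extc]

theorem extc_update (t : ℕ) :
    extc (Function.update σ i true) t = if t = i.1 then true else extc σ t := by
  by_cases ht : t < N
  · have : (⟨t, ht⟩ : Fin N) = i ↔ t = i.1 := Fin.ext_iff
    simp only [extc, dif_pos ht, Function.update_apply, this]
  · have : t ≠ i.1 := fun h => ht (h ▸ i.2)
    simp [extc, ht, this]

theorem extc_update_of_ne {t : ℕ} (ht : t ≠ i.1) :
    extc (Function.update σ i true) t = extc σ t := by
  rw [extc_update, if_neg ht]

theorem lrunO_iff (r : ℕ) :
    (1 ≤ r ∧ r ≤ i.1 ∧ ∀ k, 1 ≤ k → k ≤ r → extc σ (i.1 - k) = true) ↔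
      1 ≤ r ∧ r ≤ lrunO σ i := by
  convert iff_le_card_filter_range (N := N)
    (P := fun r => 1 ≤ r ∧ r ≤ i.1 ∧ ∀ k, 1 ≤ k → k ≤ r → extc σ (i.1 - k) = true) (by omega)
    (fun _ _ ⟨_, hr, h⟩ h1 h2 => ⟨h1, h2.trans hr, fun k hk1 hk2 => h k hk1 (hk2.trans h2)⟩)
    (fun _ h => h.2.1.trans_lt i.2) r using 3
  unfold lrunO
  congr

theorem rrunO_iff (r : ℕ) :
    (1 ≤ r ∧ ∀ k, 1 ≤ k → k ≤ r → extc σ (i.1 + k) = true) ↔ 1 ≤ r ∧ r ≤ rrunO σ i := by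
  convert iff_le_card_filter_range (N := N)
    (P := fun r => 1 ≤ r ∧ ∀ k, 1 ≤ k → k ≤ r → extc σ (i.1 + k) = true) (by omega)
    (fun _ _ ⟨_, h⟩ h1 h2 => ⟨h1, fun k hk1 hk2 => h k hk1 (hk2.trans h2)⟩)
    (fun r h => by have := lt_of_extc_eq_true σ (h.2 r h.1 le_rfl); omega) r using 3
  unfold rrunO
  congr

theorem lrunO_le : lrunO σ i ≤ i.1 := by
  rcases Nat.eq_zero_or_pos (lrunO σ i) with h | h
  · omega
  · exact ((lrunO_iff σ i _).2 ⟨h, le_rfl⟩).2.1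

theorem extc_of_lrunO {t : ℕ} (h₁ : i.1 - lrunO σ i ≤ t) (h₂ : t < i.1) :
    extc σ t = true := by
  have := ((lrunO_iff σ i (i.1 - t)).2 ⟨by omega, by omega⟩).2.2 (i.1 - t) (by omega) le_rfl
  rwa [Nat.sub_sub_self h₂.le] at this

theorem lrunO_maximal : i.1 - lrunO σ i = 0 ∨ extc σ (i.1 - lrunO σ i - 1) = false := by
  by_contra! h
  obtain ⟨h0, hocc⟩ := h
  have hmax :=
    ((lrunO_iff σ i (lrunO σ i + 1)).1 ⟨by omega, by omega, fun k hk1 hk2 => ?_⟩).2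
  · omega
  · rcases Nat.lt_or_ge k (lrunO σ i + 1) with hk | hk
    · exact extc_of_lrunO σ i (by omega) (by omega)
    · rw [show i.1 - k = i.1 - lrunO σ i - 1 by omega]
      simpa using hocc

theorem extc_of_rrunO {t : ℕ} (h₁ : i.1 < t) (h₂ : t ≤ i.1 + rrunO σ i) :
    extc σ t = true := by
  have := ((rrunO_iff σ i (t - i.1)).2 ⟨by omega, by omega⟩).2 (t - i.1) (by omega) le_rfl
  rwa [Nat.add_sub_cancel' h₁.le] at this

theorem extc_rrunO_succ : extc σ (i.1 + rrunO σ i + 1) = false := by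
  by_contra! hocc
  have hmax := ((rrunO_iff σ i (rrunO σ i + 1)).1 ⟨by omega, fun k hk1 hk2 => ?_⟩).2
  · omega
  · rcases Nat.lt_or_ge k (rrunO σ i + 1) with hk | hk
    · exact extc_of_rrunO σ i (by omega) (by omega)
    · rw [show i.1 + k = i.1 + rrunO σ i + 1 by omega]
      simpa using hocc

theorem eq_sub_lrunO_of_run {j : ℕ} (hj : j ≤ i.1) (hstart : j = 0 ∨ extc σ (j - 1) = false)
    (hocc : ∀ t, j ≤ t → t < i.1 → extc σ t = true) : j = i.1 - lrunO σ i := by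
  have hle := lrunO_le σ i
  rcases lt_trichotomy j (i.1 - lrunO σ i) with h | h | h
  · rcases lrunO_maximal σ i with h0 | hfree
    · omega
    · rw [hocc _ (by omega) (by omega)] at hfree
      simp at hfree
  · exact h
  · rcases hstart with h0 | hfree
    · omega
    · rw [extc_of_lrunO σ i (by omega) (by omega)] at hfree
      simp at hfree

theorem extc_update_of_mem_run {t : ℕ} (h₁ : i.1 - lrunO σ i ≤ t)
    (h₂ : t ≤ i.1 + rrunO σ i) : extc (Function.update σ i true) t = true := by
  rw [extc_update]
  split_ifs with ht
  · rfl
  rcases Nat.lt_or_gt_of_ne ht with ht | ht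
  · exact extc_of_lrunO σ i h₁ ht
  · exact extc_of_rrunO σ i ht h₂

theorem lrunO_add_rrunO_add_one_le {ℓ : ℕ}
    (hτ : ∀ p : ℕ, ¬ ∀ k ≤ ℓ, extc (Function.update σ i true) (p + k) = true) :
    lrunO σ i + rrunO σ i + 1 ≤ ℓ := by
  have := lrunO_le σ i
  by_contra h
  exact hτ (i.1 - lrunO σ i) fun k hk => extc_update_of_mem_run σ i (by omega) (by omega)

end OpenRuns

def IsClusterStart {N : ℕ} (σ : Config N) (k j : ℕ) : Prop :=
  (j = 0 ∨ extc σ (j - 1) = false) ∧ (∀ t < k, extc σ (j + t) = true) ∧ extc σ (j + k) = false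

theorem clustO_eq_card (N : ℕ) (σ : Config N) (k : ℕ) :
    clustO N σ k = #((range N).filter (IsClusterStart σ k)) := by
  unfold clustO IsClusterStart
  congr

section ClusterStart

variable {N : ℕ}

theorem isClusterStart_congr {ρ ρ' : Config N} {k j : ℕ}
    (h : ∀ t, j ≤ t + 1 → t ≤ j + k → extc ρ t = extc ρ' t) :
    IsClusterStart ρ k j ↔ IsClusterStart ρ' k j := by
  have hprev : (j = 0 ∨ extc ρ (j - 1) = false) ↔ (j = 0 ∨ extc ρ' (j - 1) = false) := by
    rcases Nat.eq_zero_or_pos j with hj | hj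
    · simp [hj]
    · rw [h (j - 1) (by omega) (by omega)]
  unfold IsClusterStart
  rw [hprev, h (j + k) (by omega) le_rfl]
  refine and_congr_right fun _ => and_congr_left fun _ => forall₂_congr fun t ht => ?_
  rw [h (j + t) (by omega) (by omega)]

theorem isClusterStart_iff_of_run {ρ : Config N} {p q k : ℕ} (hpq : p ≤ q)
    (hp : p = 0 ∨ extc ρ (p - 1) = false) (hocc : ∀ t, p ≤ t → t < q → extc ρ t = true)
    (hq : extc ρ q = false) : IsClusterStart ρ k p ↔ k = q - p := by
  constructor
  · rintro ⟨-, hrun, hend⟩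
    by_contra hk
    rcases Nat.lt_or_gt_of_ne hk with hk | hk
    · rw [hocc (p + k) (by omega) (by omega)] at hend
      simp at hend
    · have := hrun (q - p) hk
      rw [Nat.add_sub_cancel' hpq, hq] at this
      simp at this
  · rintro rfl
    exact ⟨hp, fun t ht => hocc _ (by omega) (by omega), by rwa [Nat.add_sub_cancel' hpq]⟩

variable (σ : Config N) (i : Fin N)

/-- A cluster start whose window `[j - 1, j + k]` contains `i` is forced to be one of the two
excluded positions. -/
theorem isClusterStart_update_iff (hσi : σ i = false) {k j : ℕ}
    (hjL : j ≠ i.1 - lrunO σ i) (hjR : j ≠ i.1 + 1) :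
    IsClusterStart (Function.update σ i true) k j ↔ IsClusterStart σ k j := by
  have hσi' : extc σ i.1 = false := by rw [extc_val, hσi]
  by_cases hwin : j ≤ i.1 + 1 ∧ i.1 ≤ j + k
  · refine iff_of_false ?_ ?_
    · rintro ⟨hstart, hrun, hend⟩
      have hji : j ≤ i.1 := by
        by_contra h
        rcases hstart with h0 | hfree
        · omega
        · rw [show j - 1 = i.1 by omega, extc_update, if_pos rfl] at hfree
          simp at hfree
      have hik : i.1 < j + k := by
        by_contra h
        rw [show j + k = i.1 by omega, extc_update, if_pos rfl] at hend
        simp at hend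
      refine hjL (eq_sub_lrunO_of_run σ i hji ?_ fun t ht₁ ht₂ => ?_)
      · rcases hstart with h0 | hfree
        · exact Or.inl h0
        · rw [extc_update_of_ne σ i (by omega)] at hfree
          exact Or.inr hfree
      · have := hrun (t - j) (by omega)
        rwa [Nat.add_sub_cancel' ht₁, extc_update_of_ne σ i (by omega)] at this
    · rintro ⟨hstart, hrun, hend⟩
      rcases Nat.lt_or_ge i.1 j with h | h
      · exact hjR (by omega)
      rcases Nat.lt_or_ge i.1 (j + k) with h' | h'
      · have := hrun (i.1 - j) (by omega)
        rw [Nat.add_sub_cancel' h, hσi'] at this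
        simp at this
      · refine hjL (eq_sub_lrunO_of_run σ i h hstart fun t ht₁ ht₂ => ?_)
        have := hrun (t - j) (by omega)
        rwa [Nat.add_sub_cancel' ht₁] at this
  · exact isClusterStart_congr fun t h₁ h₂ =>
      extc_update_of_ne σ i fun ht => hwin (ht ▸ ⟨h₁, h₂⟩)

theorem clustO_update (hσi : σ i = false) {k : ℕ} (hk : 1 ≤ k) :
    clustO N σ k + (if k = lrunO σ i + rrunO σ i + 1 then 1 else 0) =
      clustO N (Function.update σ i true) k + (if k = lrunO σ i then 1 else 0) +
        (if k = rrunO σ i then 1 else 0) := by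
  set τ := Function.update σ i true
  set a := lrunO σ i
  set b := rrunO σ i
  have ha := lrunO_le σ i
  have hσi' : extc σ i.1 = false := by rw [extc_val, hσi]
  have hend : extc τ (i.1 + b + 1) = false := by
    rw [extc_update_of_ne σ i (by omega)]
    exact extc_rrunO_succ σ i
  have hL : i.1 - a ∈ range N := mem_range.2 (by omega)
  have hleftσ : (i.1 - a ∈ range N ∧ IsClusterStart σ k (i.1 - a)) ↔ k = a := by
    rw [and_iff_right hL, isClusterStart_iff_of_run (by omega) (lrunO_maximal σ i)
      (fun t h₁ h₂ => extc_of_lrunO σ i h₁ h₂) hσi', Nat.sub_sub_self ha]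
  have hleftτ : (i.1 - a ∈ range N ∧ IsClusterStart τ k (i.1 - a)) ↔ k = a + b + 1 := by
    have hstart : i.1 - a = 0 ∨ extc τ (i.1 - a - 1) = false := by
      by_cases h0 : i.1 - a = 0
      · exact Or.inl h0
      · rw [extc_update_of_ne σ i (by omega)]
        exact Or.inr ((lrunO_maximal σ i).resolve_left h0)
    rw [and_iff_right hL, isClusterStart_iff_of_run (by omega) hstart
      (fun t h₁ h₂ => extc_update_of_mem_run σ i h₁ (by omega)) hend]
    omega
  have hrightσ : (i.1 + 1 ∈ range N ∧ IsClusterStart σ k (i.1 + 1)) ↔ k = b := by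
    rw [isClusterStart_iff_of_run (by omega) (Or.inr hσi')
      (fun t h₁ h₂ => extc_of_rrunO σ i h₁ (by omega)) (extc_rrunO_succ σ i)]
    refine ⟨fun h => by omega, fun h => ⟨mem_range.2 ?_, by omega⟩⟩
    exact lt_of_extc_eq_true σ (extc_of_rrunO σ i (t := i.1 + 1) (by omega) (by omega))
  have hrightτ : ¬ (i.1 + 1 ∈ range N ∧ IsClusterStart τ k (i.1 + 1)) := by
    rintro ⟨-, hstart, -⟩
    rw [Nat.add_sub_cancel, extc_update, if_pos rfl] at hstart
    simp at hstart
  have hcount := card_filter_add_eq_of_forall_ne (range N) (P := IsClusterStart σ k)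
    (Q := IsClusterStart τ k) (L := i.1 - a) (R := i.1 + 1) (by omega)
    fun j hjL hjR => (isClusterStart_update_iff σ i hσi hjL hjR).symm
  rw [if_congr hleftσ rfl rfl, if_congr hleftτ rfl rfl, if_congr hrightσ rfl rfl,
    if_neg hrightτ] at hcount
  rw [clustO_eq_card, clustO_eq_card]
  omega

end ClusterStart

section Weights

theorem prod_pow_ite_eq {M : Type*} [CommMonoid M] (μ : ℕ → M) (hμ0 : μ 0 = 1) {ℓ a : ℕ}
    (ha : a ≤ ℓ) : ∏ k ∈ Icc 1 ℓ, μ k ^ (if k = a then 1 else 0) = μ a := by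
  simp_rw [eq_comm (b := a)]
  rw [prod_pow_boole]
  split_ifs with h
  · rfl
  · rw [show a = 0 by simp at h; omega, hμ0]

theorem prod_pow_mul_eq_of_merge {M : Type*} [CommMonoid M] (μ : ℕ → M) (hμ0 : μ 0 = 1)
    {ℓ a b : ℕ} (hab : a + b + 1 ≤ ℓ) {c c' : ℕ → ℕ}
    (h : ∀ k ∈ Icc 1 ℓ, c k + (if k = a + b + 1 then 1 else 0) =
      c' k + (if k = a then 1 else 0) + (if k = b then 1 else 0)) :
    (∏ k ∈ Icc 1 ℓ, μ k ^ c k) * μ (a + b + 1) =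
      (∏ k ∈ Icc 1 ℓ, μ k ^ c' k) * μ a * μ b := by
  rw [← prod_pow_ite_eq μ hμ0 hab, ← prod_pow_ite_eq μ hμ0 (ℓ := ℓ) (a := a) (by omega),
    ← prod_pow_ite_eq μ hμ0 (ℓ := ℓ) (a := b) (by omega), ← prod_mul_distrib,
    ← prod_mul_distrib, ← prod_mul_distrib]
  refine prod_congr rfl fun k hk => ?_
  rw [← pow_add, ← pow_add, ← pow_add, h k hk]

theorem muProd_zero (lam1 : ℕ → ℝ) : muProd lam1 0 = 1 := by
  simp [muProd]

theorem lamGen_merge (lam1 : ℕ → ℝ) (a b : ℕ) :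
    lamGen lam1 (a + b + 1) (a + 1) =
      muProd lam1 (a + b + 1) / (muProd lam1 a * muProd lam1 b) := by
  simp only [lamGen, Nat.add_sub_cancel, show a + b + 1 - (a + 1) = b by omega]

variable {ℓ : ℕ} {lam1 : ℕ → ℝ}

theorem muProd_ne_zero (hnz : ∀ j, 1 ≤ j → j ≤ ℓ → lam1 j ≠ 0) {k : ℕ} (hk : k ≤ ℓ) :
    muProd lam1 k ≠ 0 :=
  prod_ne_zero_iff.2 fun j hj => hnz j (mem_Icc.1 hj).1 ((mem_Icc.1 hj).2.trans hk)

theorem diagO_eq_inv_prod (N : ℕ) (σ : Config N) :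
    diagO ℓ N lam1 σ = (∏ k ∈ Icc 1 ℓ, ((muProd lam1 k : ℝ) : ℂ) ^ clustO N σ k)⁻¹ := by
  simp only [diagO, zpow_neg, zpow_natCast, prod_inv_distrib]

theorem prod_muProd_pow_ne_zero (hnz : ∀ j, 1 ≤ j → j ≤ ℓ → lam1 j ≠ 0) (c : ℕ → ℕ) :
    ∏ k ∈ Icc 1 ℓ, ((muProd lam1 k : ℝ) : ℂ) ^ c k ≠ 0 :=
  prod_ne_zero_iff.2 fun _ hk =>
    pow_ne_zero _ (Complex.ofReal_ne_zero.2 (muProd_ne_zero hnz (mem_Icc.1 hk).2))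

theorem prod_muProd_zpow_ne_zero (hnz : ∀ j, 1 ≤ j → j ≤ ℓ → lam1 j ≠ 0) (c : ℕ → ℕ) :
    ∏ k ∈ Icc 1 ℓ, ((muProd lam1 k : ℝ) : ℂ) ^ (-(c k : ℤ)) ≠ 0 :=
  prod_ne_zero_iff.2 fun _ hk =>
    zpow_ne_zero _ (Complex.ofReal_ne_zero.2 (muProd_ne_zero hnz (mem_Icc.1 hk).2))

theorem diagO_update_mul_AmpO (hnz : ∀ j, 1 ≤ j → j ≤ ℓ → lam1 j ≠ 0) {N : ℕ}
    (σ : Config N) (i : Fin N) (hσi : σ i = false)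
    (hlen : lrunO σ i + rrunO σ i + 1 ≤ ℓ) :
    diagO ℓ N lam1 (Function.update σ i true) * AmpO (lamGen lam1) σ i *
      (diagO ℓ N lam1 σ)⁻¹ = 1 := by
  set a := lrunO σ i
  set b := rrunO σ i
  have hμ : ∀ k ≤ ℓ, ((muProd lam1 k : ℝ) : ℂ) ≠ 0 := fun k hk =>
    Complex.ofReal_ne_zero.2 (muProd_ne_zero hnz hk)
  have hamp : AmpO (lamGen lam1) σ i = ((muProd lam1 (a + b + 1) : ℝ) : ℂ) /
      (((muProd lam1 a : ℝ) : ℂ) * ((muProd lam1 b : ℝ) : ℂ)) := by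
    simp [AmpO, lamGen_merge, a, b]
  have hmerge := prod_pow_mul_eq_of_merge (fun k => ((muProd lam1 k : ℝ) : ℂ))
    (by simp [muProd_zero]) hlen (c := clustO N σ) (c' := clustO N (Function.update σ i true))
    fun k hk => clustO_update σ i hσi (mem_Icc.1 hk).1
  rw [diagO_eq_inv_prod, diagO_eq_inv_prod, inv_inv, hamp]
  have := prod_muProd_pow_ne_zero hnz (clustO N (Function.update σ i true))
  have := hμ a (by omega)
  have := hμ b (by omega)
  field_simp
  linear_combination hmerge

end Weights

section Rotation

variable {N : ℕ}

theorem cyc_cyc (i : Fin N) (d t : ℕ) : cyc (cyc i d) t = cyc i (d + t) :=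
  Fin.ext (by simp only [cyc, Nat.mod_add_mod, Nat.add_assoc])

theorem cyc_add_self (i : Fin N) (d : ℕ) : cyc i (d + N) = cyc i d :=
  Fin.ext (by simp only [cyc, ← Nat.add_assoc, Nat.add_mod_right])

theorem cyc_zero (i : Fin N) : cyc i 0 = i :=
  Fin.ext (by simp only [cyc, Nat.add_zero, Nat.mod_eq_of_lt i.2])

theorem cyc_injOn (i : Fin N) {d₁ d₂ : ℕ} (h₁ : d₁ < N) (h₂ : d₂ < N)
    (h : cyc i d₁ = cyc i d₂) : d₁ = d₂ := by
  have hmod : d₁ % N = d₂ % N := Nat.ModEq.add_left_cancel' i.1 (congrArg Fin.val h)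
  rwa [Nat.mod_eq_of_lt h₁, Nat.mod_eq_of_lt h₂] at hmod

theorem exists_cyc_eq (i j : Fin N) : ∃ d < N, cyc i d = j := by
  refine ⟨(N - i.1 + j.1) % N, Nat.mod_lt _ i.pos, Fin.ext ?_⟩
  have := i.2
  simp only [cyc, Nat.add_mod_mod, show i.1 + (N - i.1 + j.1) = j.1 + N by omega,
    Nat.add_mod_right, Nat.mod_eq_of_lt j.2]

def rotate (σ : Config N) (s : Fin N) : Config N := fun j => σ (cyc s j.1)

variable (σ : Config N) (s : Fin N)

theorem extc_rotate_of_lt {u : ℕ} (hu : u < N) : extc (rotate σ s) u = σ (cyc s u) := by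
  simp [extc, rotate, hu]

theorem rotate_update (i' : Fin N) :
    rotate (Function.update σ (cyc s i'.1) true) s = Function.update (rotate σ s) i' true := by
  funext j
  have hj : cyc s j.1 = cyc s i'.1 ↔ j = i' :=
    ⟨fun h => Fin.ext (cyc_injOn s j.2 i'.2 h), fun h => h ▸ rfl⟩
  simp only [rotate, Function.update_apply, hj]

theorem not_forall_extc_rotate_of_perOK {ℓ : ℕ} (hσ : PerOK N ℓ σ) :
    ∀ p : ℕ, ¬ ∀ k ≤ ℓ, extc (rotate σ s) (p + k) = true := by
  intro p hp
  obtain ⟨k, hk, hfree⟩ := hσ (cyc s p)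
  have hocc := hp k hk
  rw [extc_rotate_of_lt σ s (lt_of_extc_eq_true _ hocc), ← cyc_cyc, hfree] at hocc
  simp at hocc

variable {σ s}

theorem add_lt_of_run (hs : σ (cyc s (N - 1)) = false) {d k : ℕ} (hd : d < N)
    (hrun : ∀ t < k, σ (cyc s (d + t)) = true) : d + k < N := by
  by_contra h
  have := hrun (N - 1 - d) (by omega)
  rw [show d + (N - 1 - d) = N - 1 by omega, hs] at this
  simp at this

theorem isClusterStart_rotate_iff (hs : σ (cyc s (N - 1)) = false) {d k : ℕ} (hd : d < N) :
    IsClusterStart (rotate σ s) k d ↔ σ (cyc (cyc s d) (N - 1)) = false ∧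
      (∀ t < k, σ (cyc (cyc s d) t) = true) ∧ σ (cyc (cyc s d) k) = false := by
  simp only [cyc_cyc]
  have hstart :
      (d = 0 ∨ extc (rotate σ s) (d - 1) = false) ↔ σ (cyc s (d + (N - 1))) = false := by
    rcases Nat.eq_zero_or_pos d with h0 | hpos
    · simp [h0, hs]
    · rw [extc_rotate_of_lt σ s (by omega), show d + (N - 1) = d - 1 + N by omega,
        cyc_add_self]
      exact or_iff_right hpos.ne'
  unfold IsClusterStart
  rw [hstart]
  refine and_congr_right fun _ => ⟨fun ⟨hrun, hend⟩ => ?_, fun ⟨hrun, hend⟩ => ?_⟩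
  · have hrun' : ∀ t < k, σ (cyc s (d + t)) = true := fun t ht => by
      have h := hrun t ht
      rwa [extc_rotate_of_lt σ s (lt_of_extc_eq_true _ h)] at h
    exact ⟨hrun', by rwa [extc_rotate_of_lt σ s (add_lt_of_run hs hd hrun')] at hend⟩
  · have hk := add_lt_of_run hs hd hrun
    exact ⟨fun t ht => by rw [extc_rotate_of_lt σ s (by omega)]; exact hrun t ht,
      by rwa [extc_rotate_of_lt σ s hk]⟩

theorem clustP_eq_clustO_rotate (hs : σ (cyc s (N - 1)) = false) (k : ℕ) :
    clustP N σ k = clustO N (rotate σ s) k := by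
  rw [clustO_eq_card, clustP]
  symm
  refine card_bij (fun d _ => cyc s d) (fun d hd => ?_)
    (fun d₁ hd₁ d₂ hd₂ h => cyc_injOn s (mem_range.1 (mem_filter.1 hd₁).1)
      (mem_range.1 (mem_filter.1 hd₂).1) h) (fun j hj => ?_)
  · obtain ⟨hdN, hstart⟩ := mem_filter.1 hd
    exact mem_filter.2 ⟨mem_univ _, (isClusterStart_rotate_iff hs (mem_range.1 hdN)).1 hstart⟩
  · obtain ⟨d, hdN, rfl⟩ := exists_cyc_eq s j
    exact ⟨d, mem_filter.2 ⟨mem_range.2 hdN,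
      (isClusterStart_rotate_iff hs hdN).2 (mem_filter.1 hj).2⟩, rfl⟩

theorem lrunP_eq_lrunO_rotate (hs : σ (cyc s (N - 1)) = false) (i' : Fin N) :
    lrunP σ (cyc s i'.1) = lrunO (rotate σ s) i' := by
  unfold lrunP lrunO
  congr 1
  ext r
  simp only [mem_filter]
  refine and_congr_right fun _ => and_congr_right fun _ => ?_
  simp only [cyc_cyc]
  constructor
  · intro hocc
    have hri : r ≤ i'.1 := by
      by_contra h
      have := hocc (i'.1 + 1) (by omega) (by omega)
      rw [show i'.1 + (N - (i'.1 + 1)) = N - 1 by omega, hs] at this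
      simp at this
    refine ⟨hri, fun k hk1 hk2 => ?_⟩
    rw [extc_rotate_of_lt σ s (by omega), ← hocc k hk1 hk2,
      show i'.1 + (N - k) = i'.1 - k + N by omega, cyc_add_self]
  · rintro ⟨hri, hocc⟩ k hk1 hk2
    rw [show i'.1 + (N - k) = i'.1 - k + N by omega, cyc_add_self,
      ← extc_rotate_of_lt σ s (by omega)]
    exact hocc k hk1 hk2

theorem rrunP_eq_rrunO_rotate (hs : σ (cyc s (N - 1)) = false) (i' : Fin N)
    (hi' : i'.1 + 1 < N) : rrunP σ (cyc s i'.1) = rrunO (rotate σ s) i' := by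
  unfold rrunP rrunO
  congr 1
  ext r
  simp only [mem_filter]
  refine and_congr_right fun _ => and_congr_right fun _ => ?_
  simp only [cyc_cyc]
  constructor
  · intro hocc k hk1 hk2
    have hlt := add_lt_of_run hs hi' (k := r) fun t ht => by
      rw [Nat.add_assoc]; exact hocc (1 + t) (by omega) (by omega)
    rw [extc_rotate_of_lt σ s (by omega)]
    exact hocc k hk1 hk2
  · intro hocc k hk1 hk2
    have h := hocc k hk1 hk2
    rwa [extc_rotate_of_lt σ s (lt_of_extc_eq_true _ h)] at h

theorem diagP_eq_diagO_rotate (hs : σ (cyc s (N - 1)) = false) (ℓ : ℕ) (lam1 : ℕ → ℝ) :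
    diagP ℓ N lam1 σ = diagO ℓ N lam1 (rotate σ s) := by
  simp only [diagP, diagO, clustP_eq_clustO_rotate hs]

theorem AmpP_eq_AmpO_rotate (hs : σ (cyc s (N - 1)) = false) (lam : ℕ → ℕ → ℝ) (i' : Fin N)
    (hi' : i'.1 + 1 < N) : AmpP lam σ (cyc s i'.1) = AmpO lam (rotate σ s) i' := by
  simp only [AmpP, AmpO, lrunP_eq_lrunO_rotate hs, rrunP_eq_rrunO_rotate hs i' hi']

end Rotation

theorem diagP_update_mul_AmpP {ℓ : ℕ} {lam1 : ℕ → ℝ} (hnz : ∀ j, 1 ≤ j → j ≤ ℓ → lam1 j ≠ 0)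
    {N : ℕ} (σ : Config N) (i : Fin N) (hσi : σ i = false)
    (hτ : PerOK N ℓ (Function.update σ i true)) :
    diagP ℓ N lam1 (Function.update σ i true) * AmpP (lamGen lam1) σ i *
      (diagP ℓ N lam1 σ)⁻¹ = 1 := by
  obtain ⟨k, -, he⟩ := hτ i
  have hei : cyc i k ≠ i := fun h => by
    rw [h, Function.update_self] at he
    simp at he
  set s := cyc (cyc i k) 1
  have hs : cyc s (N - 1) = cyc i k := by
    rw [cyc_cyc, show 1 + (N - 1) = 0 + N by have := i.pos; omega, cyc_add_self, cyc_zero]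
  have hσs : σ (cyc s (N - 1)) = false := by
    rwa [hs, ← Function.update_of_ne hei true σ]
  obtain ⟨d, hdN, hd⟩ := exists_cyc_eq s i
  set j : Fin N := ⟨d, hdN⟩
  have hj : cyc s j.1 = i := hd
  have hj1 : j.1 + 1 < N := by
    by_contra h
    exact hei (by rw [← hs, ← hj, show j.1 = N - 1 by omega])
  have hτs : Function.update σ (cyc s j.1) true (cyc s (N - 1)) = false := by rwa [hj, hs]
  rw [← hj] at hτ hσi ⊢
  rw [diagP_eq_diagO_rotate hτs, diagP_eq_diagO_rotate hσs, AmpP_eq_AmpO_rotate hσs _ j hj1,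
    rotate_update]
  refine diagO_update_mul_AmpO hnz (rotate σ s) j hσi (lrunO_add_rrunO_add_one_le _ _ ?_)
  rw [← rotate_update]
  exact not_forall_extc_rotate_of_perOK _ s hτ

section Conjugation

open Matrix

variable {N : ℕ} {OK : Config N → Prop}

theorem diagonal_mul_QmatA_mul_diagonal_inv (A : Config N → Fin N → ℂ)
    (d : {σ // OK σ} → ℂ)
    (h : ∀ (σ τ : {σ // OK σ}) (i : Fin N), σ.1 i = false →
      τ.1 = Function.update σ.1 i true → d τ * A σ.1 i * (d σ)⁻¹ = 1) :
    diagonal d * QmatA N OK (fun _ => True) A * diagonal (fun σ => (d σ)⁻¹) =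
      QmatA N OK (fun _ => True) (fun _ _ => 1) := by
  ext τ σ
  rw [mul_diagonal, diagonal_mul, QmatA, QmatA, mul_sum, sum_mul]
  refine sum_congr rfl fun i _ => ?_
  split_ifs with hc
  · rw [← h σ τ i hc.2.1 hc.2.2]
    ring
  · simp

theorem Submodule.finrank_quotient_comap_subtype_eq {K V W : Type*} [Field K] [AddCommGroup V]
    [Module K V] [AddCommGroup W] [Module K W] (e : V ≃ₗ[K] W) {Z B : Submodule K V}
    {Z' B' : Submodule K W} (hZ : Z.map e.toLinearMap = Z') (hB : B.map e.toLinearMap = B') :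
    Module.finrank K (Z ⧸ B.comap Z.subtype) = Module.finrank K (Z' ⧸ B'.comap Z'.subtype) := by
  subst hZ hB
  refine LinearEquiv.finrank_eq (Submodule.Quotient.equiv _ _ (e.submoduleMap Z) ?_)
  ext ⟨x, hx⟩
  simp

theorem cohDimA_eq_of_linearEquiv {A B : Config N → Fin N → ℂ}
    (e : AState N OK ≃ₗ[ℂ] AState N OK)
    (hgrade : ∀ g ψ, e ψ ∈ gradeV N OK g ↔ ψ ∈ gradeV N OK g)
    (hcomm : ∀ ψ, e (QopA N OK (fun _ => True) A ψ) = QopA N OK (fun _ => True) B (e ψ))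
    (f : ℕ) : cohDimA N OK A f = cohDimA N OK B f := by
  have hmap : ∀ g, (gradeV N OK g).map e.toLinearMap = gradeV N OK g := fun g => by
    ext ψ
    rw [Submodule.mem_map_equiv, ← hgrade, e.apply_symm_apply]
  have hker : (LinearMap.ker (QopA N OK (fun _ => True) A)).map e.toLinearMap =
      LinearMap.ker (QopA N OK (fun _ => True) B) := by
    ext ψ
    rw [Submodule.mem_map_equiv, LinearMap.mem_ker, LinearMap.mem_ker, ← e.map_eq_zero_iff,
      hcomm, e.apply_symm_apply]
  have hcomp : e.toLinearMap ∘ₗ QopA N OK (fun _ => True) A =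
      QopA N OK (fun _ => True) B ∘ₗ e.toLinearMap := LinearMap.ext hcomm
  refine Submodule.finrank_quotient_comap_subtype_eq e ?_ ?_
  · rw [cocyclesA, cocyclesA, Submodule.map_inf _ e.injective, hker, hmap]
  · rw [coboundsA, coboundsA, ← Submodule.map_comp, hcomp, Submodule.map_comp, hmap]

theorem conj_QmatA_and_cohDimA_eq (A : Config N → Fin N → ℂ) (d : {σ // OK σ} → ℂ)
    (hd : ∀ σ, d σ ≠ 0)
    (h : ∀ (σ τ : {σ // OK σ}) (i : Fin N), σ.1 i = false →
      τ.1 = Function.update σ.1 i true → d τ * A σ.1 i * (d σ)⁻¹ = 1) :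
    diagonal d * QmatA N OK (fun _ => True) A * diagonal (fun σ => (d σ)⁻¹) =
        QmatA N OK (fun _ => True) (fun _ _ => 1) ∧
      ∀ f, cohDimA N OK A f = cohDimA N OK (fun _ _ => 1) f := by
  have hconj := diagonal_mul_QmatA_mul_diagonal_inv A d h
  have hcomm : diagonal d * QmatA N OK (fun _ => True) A =
      QmatA N OK (fun _ => True) (fun _ _ => 1) * diagonal d := by
    rw [← hconj, Matrix.mul_assoc _ (diagonal _), diagonal_mul_diagonal]
    simp [hd]
  let e : AState N OK ≃ₗ[ℂ] AState N OK :=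
    LinearEquiv.piCongrRight fun σ => LinearEquiv.smulOfNeZero ℂ ℂ (d σ) (hd σ)
  have he : ∀ φ, e φ = diagonal d *ᵥ φ := fun φ => by
    funext σ
    simp [e, mulVec_diagonal]
  refine ⟨hconj, cohDimA_eq_of_linearEquiv e (fun g ψ => ?_) (fun ψ => ?_)⟩
  · show (∀ σ, fermions σ.1 ≠ g → e ψ σ = 0) ↔ ∀ σ, fermions σ.1 ≠ g → ψ σ = 0
    simp [he, mulVec_diagonal, hd]
  · simp only [he, QopA, mulVecLin_apply, mulVec_mulVec, hcomm]

end Conjugation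

theorem conjugation_to_unit_couplings_general (ℓ : ℕ) (lam1 : ℕ → ℝ)
    (hnz : ∀ j, 1 ≤ j → j ≤ ℓ → lam1 j ≠ 0) (N : ℕ) :
    (∀ c₁ cN, c₁ ≤ ℓ → cN ≤ ℓ →
      (∀ σ : {σ : Config N // OpenOK N ℓ c₁ cN σ}, diagO ℓ N lam1 σ.1 ≠ 0) ∧
      Matrix.diagonal (fun σ : {σ : Config N // OpenOK N ℓ c₁ cN σ} => diagO ℓ N lam1 σ.1) *
          QmatA N (OpenOK N ℓ c₁ cN) (fun _ => True) (AmpO (lamGen lam1)) *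
          Matrix.diagonal (fun σ : {σ : Config N // OpenOK N ℓ c₁ cN σ} =>
            (diagO ℓ N lam1 σ.1)⁻¹) =
        QmatA N (OpenOK N ℓ c₁ cN) (fun _ => True) (fun _ _ => 1) ∧
      ∀ f, cohDimA N (OpenOK N ℓ c₁ cN) (AmpO (lamGen lam1)) f =
        cohDimA N (OpenOK N ℓ c₁ cN) (fun _ _ => 1) f) ∧
    ((∀ σ : {σ : Config N // PerOK N ℓ σ}, diagP ℓ N lam1 σ.1 ≠ 0) ∧
      Matrix.diagonal (fun σ : {σ : Config N // PerOK N ℓ σ} => diagP ℓ N lam1 σ.1) *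
          QmatA N (PerOK N ℓ) (fun _ => True) (AmpP (lamGen lam1)) *
          Matrix.diagonal (fun σ : {σ : Config N // PerOK N ℓ σ} =>
            (diagP ℓ N lam1 σ.1)⁻¹) =
        QmatA N (PerOK N ℓ) (fun _ => True) (fun _ _ => 1) ∧
      ∀ f, cohDimA N (PerOK N ℓ) (AmpP (lamGen lam1)) f =
        cohDimA N (PerOK N ℓ) (fun _ _ => 1) f) := by
  refine ⟨fun c₁ cN _ _ => ?_, ?_⟩
  · have hd : ∀ σ : {σ // OpenOK N ℓ c₁ cN σ}, diagO ℓ N lam1 σ.1 ≠ 0 :=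
      fun _ => prod_muProd_zpow_ne_zero hnz _
    refine ⟨hd, conj_QmatA_and_cohDimA_eq _ _ hd fun σ τ i hσi hτ => ?_⟩
    have hlen := lrunO_add_rrunO_add_one_le σ.1 i (ℓ := ℓ) (hτ ▸ τ.2.1)
    rw [hτ]
    exact diagO_update_mul_AmpO hnz σ.1 i hσi hlen
  · have hd : ∀ σ : {σ // PerOK N ℓ σ}, diagP ℓ N lam1 σ.1 ≠ 0 :=
      fun _ => prod_muProd_zpow_ne_zero hnz _
    refine ⟨hd, conj_QmatA_and_cohDimA_eq _ _ hd fun σ τ i hσi hτ => ?_⟩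
    rw [hτ]
    exact diagP_update_mul_AmpP hnz σ.1 i hσi (hτ ▸ τ.2)

/-- Conjugating the supercharge `Q_λ` (with amplitudes `λ_{m,n} = μ_m/(μ_{n-1}μ_{m-n})`
built from nonzero `λ_{1,1}, …, λ_{ℓ,1}`) by the invertible diagonal map
`M e_σ = ∏_{k=1}^ℓ μ_k^{-m_k(σ)} e_σ` yields the unit-coupling supercharge `Q`:
`M Q_λ M⁻¹ = Q`, both for special and for periodic boundary conditions. In particular
the cohomology of `Q_λ` at each fermion number `f` has the same dimension as `H_Q^f`. -/
theorem conjugation_to_unit_couplings (ℓ : ℕ) (hℓ : 1 ≤ ℓ) (lam1 : ℕ → ℝ)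
    (hnz : ∀ j, 1 ≤ j → j ≤ ℓ → lam1 j ≠ 0) (N : ℕ) :
    (∀ c₁ cN, c₁ ≤ ℓ → cN ≤ ℓ →
      (∀ σ : {σ : Config N // OpenOK N ℓ c₁ cN σ}, diagO ℓ N lam1 σ.1 ≠ 0) ∧
      Matrix.diagonal (fun σ : {σ : Config N // OpenOK N ℓ c₁ cN σ} => diagO ℓ N lam1 σ.1) *
          QmatA N (OpenOK N ℓ c₁ cN) (fun _ => True) (AmpO (lamGen lam1)) *
          Matrix.diagonal (fun σ : {σ : Config N // OpenOK N ℓ c₁ cN σ} =>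
            (diagO ℓ N lam1 σ.1)⁻¹) =
        QmatA N (OpenOK N ℓ c₁ cN) (fun _ => True) (fun _ _ => 1) ∧
      ∀ f, cohDimA N (OpenOK N ℓ c₁ cN) (AmpO (lamGen lam1)) f =
        cohDimA N (OpenOK N ℓ c₁ cN) (fun _ _ => 1) f) ∧
    ((∀ σ : {σ : Config N // PerOK N ℓ σ}, diagP ℓ N lam1 σ.1 ≠ 0) ∧
      Matrix.diagonal (fun σ : {σ : Config N // PerOK N ℓ σ} => diagP ℓ N lam1 σ.1) *
          QmatA N (PerOK N ℓ) (fun _ => True) (AmpP (lamGen lam1)) *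
          Matrix.diagonal (fun σ : {σ : Config N // PerOK N ℓ σ} =>
            (diagP ℓ N lam1 σ.1)⁻¹) =
        QmatA N (PerOK N ℓ) (fun _ => True) (fun _ _ => 1) ∧
      ∀ f, cohDimA N (PerOK N ℓ) (AmpP (lamGen lam1)) f =
        cohDimA N (PerOK N ℓ) (fun _ _ => 1) f) :=
  conjugation_to_unit_couplings_general ℓ lam1 hnz N

end
end

section
/- Let ℓ ≥ 1. For the M_ℓ model on the closed chain of N sites with periodic boundary conditions: if 1 ≤ N ≤ ℓ+1, then dim H_Q^f = 1 for f = N−1 and 0 for every other f; if N = ℓ+2, then dim H_Q^f = ℓ+1 for f = ℓ and 0 for every other f. -/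
attribute [local instance 10] Classical.propDecidable

noncomputable section

/-- The cocycles at gradeV `f`: `ker Q ∩ V_{N,f}` (for the supercharge restricted to `S`). -/
def cocycles (N : ℕ) (OK : Config N → Prop) (S : Fin N → Prop) (f : ℕ) :
    Submodule ℂ (AState N OK) :=
  LinearMap.ker (Qop N OK S) ⊓ gradeV N OK f

/-- The coboundaries at gradeV `f`: `Q (V_{N,f-1})` (for the supercharge restricted to `S`). -/
def cobounds (N : ℕ) (OK : Config N → Prop) (S : Fin N → Prop) (f : ℕ) :
    Submodule ℂ (AState N OK) :=
  (gradeV N OK (f - 1)).map (Qop N OK S)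

/-- The cohomology `H_Q^f = ker (Q : V_{N,f} → V_{N,f+1}) / Q (V_{N,f-1})`. -/
abbrev CohSpace (N : ℕ) (OK : Config N → Prop) (S : Fin N → Prop) (f : ℕ) :=
  cocycles N OK S f ⧸ ((cobounds N OK S f).comap (cocycles N OK S f).subtype)

/-- The dimension of `H_Q^f`. -/
def cohDim (N : ℕ) (OK : Config N → Prop) (S : Fin N → Prop) (f : ℕ) : ℕ :=
  Module.finrank ℂ (CohSpace N OK S f)

/-- The cohomology class represented by a cocycle. -/
def cohClass (N : ℕ) (OK : Config N → Prop) (S : Fin N → Prop) (f : ℕ)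
    (ψ : AState N OK) (h : ψ ∈ cocycles N OK S f) : CohSpace N OK S f :=
  Submodule.Quotient.mk ⟨ψ, h⟩

/-!
For `N ≤ ℓ + 2` the periodic exclusion rule only bounds the number of particles: a configuration
is allowed iff it has at most `m` particles, with `m = N - 1` for `N ≤ ℓ + 1` and `m = ℓ` for
`N = ℓ + 2`. On the full hypercube of `2 ^ N` configurations the supercharge has the contracting
homotopy "annihilate the particle at site `0`", and this homotopy survives the truncation to at
most `m` particles in every grade below `m`. So the cohomology is concentrated in grade `m`,
where its dimension is the alternating sum `∑_{f ≤ m} (-1)^(m-f) C(N, f) = C(N - 1, m)`.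
-/

open Function Finset Module

variable {N : ℕ}

theorem fermions_mono : Monotone (fermions (N := N)) := by
  intro σ τ h
  refine card_le_card fun i hi => ?_
  simp only [mem_filter, mem_univ, true_and] at hi ⊢
  exact le_antisymm (Bool.le_true _) (hi ▸ h i)

theorem fermions_update_true {σ : Config N} {i : Fin N} (h : σ i = false) :
    fermions (update σ i true) = fermions σ + 1 := by
  have : (univ.filter fun j => update σ i true j = true)
      = insert i (univ.filter fun j => σ j = true) := by
    ext j
    by_cases hj : j = i <;> simp [hj, update_apply]
  rw [fermions, this, card_insert_of_notMem (by simp [h]), fermions]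

theorem fermions_update_false {σ : Config N} {i : Fin N} (h : σ i = true) :
    fermions (update σ i false) + 1 = fermions σ := by
  rw [← fermions_update_true (update_self i false σ), update_idem, ← h, update_eq_self]

theorem fermions_add_card_empty (σ : Config N) : fermions σ + #{j | σ j = false} = N := by
  simpa [fermions] using card_filter_add_card_filter_not (s := univ) fun j => σ j = true

theorem card_fermions_eq (f : ℕ) :
    Fintype.card {σ : Config N // fermions σ = f} = N.choose f := by
  let e : Config N ≃ Finset (Fin N) :=
    { toFun σ := univ.filter fun i => σ i = true
      invFun s i := decide (i ∈ s)
      left_inv σ := by funext i; simp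
      right_inv s := by ext i; simp }
  rw [Fintype.card_congr (e.subtypeEquiv (p := fun σ => fermions σ = f)
    (q := fun s => s.card = f) fun _ => Iff.rfl), Fintype.card_finset_len, Fintype.card_fin]

theorem update_true_eq_iff {σ τ : Config N} {i : Fin N} :
    σ i = false ∧ τ = update σ i true ↔ τ i = true ∧ σ = update τ i false := by
  constructor
  · rintro ⟨hσ, rfl⟩
    rw [update_idem, ← hσ, update_eq_self, update_self]
    exact ⟨rfl, rfl⟩
  · rintro ⟨hτ, rfl⟩
    rw [update_idem, ← hτ, update_eq_self, update_self]
    exact ⟨rfl, rfl⟩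

theorem sgn_update_true {σ : Config N} {i : Fin N} (h : σ i = false) (j : Fin N) :
    sgn (update σ i true) j = (if i < j then -1 else 1) * sgn σ j := by
  unfold sgn
  split_ifs with hij
  · have : (univ.filter fun k => k < j ∧ update σ i true k = true)
        = insert i (univ.filter fun k => k < j ∧ σ k = true) := by
      ext k
      by_cases hk : k = i <;> simp [hk, hij, update_apply]
    rw [this, card_insert_of_notMem (by simp [h]), pow_succ, mul_comm]
  · have : (univ.filter fun k => k < j ∧ update σ i true k = true)
        = univ.filter fun k => k < j ∧ σ k = true := by
      ext k
      by_cases hk : k = i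
      · subst hk; simp [hij]
      · simp [hk, update_apply]
    rw [this, one_mul]

theorem sgn_zero [NeZero N] (σ : Config N) : sgn σ 0 = 1 := by
  simp [sgn]

theorem sgn_update_mul_sgn_antisymm {ρ : Config N} {i j : Fin N} (hi : ρ i = false)
    (hj : ρ j = false) (hij : i ≠ j) :
    sgn (update ρ j true) i * sgn ρ j = -(sgn (update ρ i true) j * sgn ρ i) := by
  rw [sgn_update_true hj, sgn_update_true hi]
  rcases lt_or_gt_of_ne hij with h | h
  · rw [if_neg h.not_gt, if_pos h]; ring
  · rw [if_pos h, if_neg h.not_gt]; ring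

theorem sum_sum_eq_zero_of_antisymm {ι M : Type*} [Fintype ι] [AddCommGroup M]
    [IsAddTorsionFree M] (T : ι → ι → M) (hT : ∀ i j, T i j = -T j i) :
    ∑ i, ∑ j, T i j = 0 := by
  refine self_eq_neg.mp ?_
  calc ∑ i, ∑ j, T i j
      = ∑ j, ∑ i, -T j i := by
        rw [sum_comm]; exact sum_congr rfl fun j _ => sum_congr rfl fun i _ => hT i j
    _ = -∑ i, ∑ j, T i j := by simp only [sum_neg_distrib]

/-- The supercharge on functions of all `2 ^ N` configurations, read off at the target:
`cubeQ g τ` collects the values of `g` at the configurations obtained from `τ` by removing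
one particle. -/
def cubeQ (g : Config N → ℂ) (τ : Config N) : ℂ :=
  ∑ i, if τ i = true then sgn (update τ i false) i * g (update τ i false) else 0

/-- The contracting homotopy of `cubeQ`: annihilation of the particle at site `0`. -/
def cubeH [NeZero N] (g : Config N → ℂ) (τ : Config N) : ℂ :=
  if τ 0 = false then g (update τ 0 true) else 0

theorem cubeQ_cubeQ (g : Config N → ℂ) : cubeQ (cubeQ g) = 0 := by
  funext τ
  have expand : cubeQ (cubeQ g) τ = ∑ i, ∑ j,
      if τ i = true ∧ τ j = true ∧ i ≠ j then
        sgn (update τ i false) i * sgn (update (update τ i false) j false) j *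
          g (update (update τ i false) j false)
      else 0 := by
    refine sum_congr rfl fun i _ => ?_
    by_cases hi : τ i = true
    · simp only [hi, if_true, true_and, mul_sum, cubeQ]
      refine sum_congr rfl fun j _ => ?_
      by_cases hji : j = i
      · simp [hji]
      · by_cases hj : τ j = true <;> simp [hj, hji, Ne.symm hji, mul_assoc]
    · simp [hi]
  rw [expand, Pi.zero_apply]
  refine sum_sum_eq_zero_of_antisymm _ fun i j => ?_
  by_cases h : τ i = true ∧ τ j = true ∧ i ≠ j
  · obtain ⟨hi, hj, hij⟩ := h
    rw [if_pos ⟨hi, hj, hij⟩, if_pos ⟨hj, hi, hij.symm⟩]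
    set ρ := update (update τ i false) j false with hρ
    have hρ' : update (update τ j false) i false = ρ := update_comm hij.symm _ _ _
    have hρi : ρ i = false := by rw [← hρ']; exact update_self _ _ _
    have hρj : ρ j = false := update_self _ _ _
    have hτi : update τ i false = update ρ j true := by
      rw [hρ, update_idem, eq_comm, update_eq_self_iff, update_of_ne hij.symm, hj]
    have hτj : update τ j false = update ρ i true := by
      rw [← hρ', update_idem, eq_comm, update_eq_self_iff, update_of_ne hij, hi]
    rw [hρ', hτi, hτj]
    linear_combination g ρ * sgn_update_mul_sgn_antisymm hρi hρj hij
  · rw [if_neg h, if_neg (by tauto), neg_zero]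

theorem cubeQ_cubeH_add_cubeH_cubeQ [NeZero N] (g : Config N → ℂ) (τ : Config N) :
    cubeQ (cubeH g) τ + cubeH (cubeQ g) τ = g τ := by
  by_cases h0 : τ 0 = false
  · rw [cubeH, if_pos h0, cubeQ, cubeQ, ← sum_add_distrib]
    refine (sum_eq_single 0 (fun i _ hi => ?_) (by simp)).trans ?_
    · -- removing the particle at `i ≠ 0` and adding one at `0` commute up to the sign of
      -- moving the particle at `0` past `i`
      by_cases hi' : τ i = true
      · have hpos : (0 : Fin N) < i := Fin.pos_iff_ne_zero.mpr hi
        rw [if_pos hi', cubeH, if_pos (by rwa [update_of_ne hi.symm]), update_of_ne hi, hi',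
          if_pos rfl, update_comm hi.symm, sgn_update_true (by rwa [update_of_ne hi.symm]),
          if_pos hpos]
        ring
      · rw [if_neg hi', update_of_ne hi, if_neg hi', add_zero]
    · rw [if_neg (by simp [h0]), zero_add, update_self, if_pos rfl, update_idem, ← h0,
        update_eq_self, sgn_zero, one_mul]
  · rw [Bool.not_eq_false] at h0
    rw [cubeH, if_neg (by simp [h0]), add_zero, cubeQ]
    refine (sum_eq_single 0 (fun i _ hi => ?_) (by simp)).trans ?_
    · simp [cubeH, update_of_ne hi.symm, h0]
    · rw [if_pos h0, cubeH, if_pos (update_self _ _ _), update_idem, ← h0, update_eq_self,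
        sgn_zero, one_mul]

def IsHomogeneous (g : Config N → ℂ) (f : ℕ) : Prop :=
  ∀ σ, fermions σ ≠ f → g σ = 0

theorem isHomogeneous_cubeQ {g : Config N → ℂ} {f : ℕ} (hg : IsHomogeneous g f) :
    IsHomogeneous (cubeQ g) (f + 1) := by
  refine fun τ hτ => sum_eq_zero fun i _ => ?_
  split_ifs with hi
  · rw [hg _ fun h => hτ (by rw [← fermions_update_false hi, h]), mul_zero]
  · rfl

theorem isHomogeneous_cubeH [NeZero N] {g : Config N → ℂ} {f : ℕ} (hg : IsHomogeneous g f) :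
    IsHomogeneous (cubeH g) (f - 1) := by
  refine fun τ hτ => ?_
  unfold cubeH
  split_ifs with h0
  · exact hg _ (by rw [fermions_update_true h0]; omega)
  · rfl

theorem finrank_comap_subtype {R M : Type*} [Semiring R] [AddCommMonoid M] [Module R M]
    (p q : Submodule R M) : finrank R (q.comap p.subtype) = finrank R ↥(p ⊓ q) := by
  rw [← Submodule.map_comap_subtype, Submodule.finrank_map_subtype_eq]

theorem finrank_map_add_finrank_ker_inf {K V W : Type*} [DivisionRing K] [AddCommGroup V]
    [Module K V] [AddCommGroup W] [Module K W] [FiniteDimensional K V] (T : V →ₗ[K] W)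
    (p : Submodule K V) :
    finrank K (p.map T) + finrank K ↥(LinearMap.ker T ⊓ p) = finrank K p := by
  have h := LinearMap.finrank_range_add_finrank_ker (T.domRestrict p)
  rwa [LinearMap.range_domRestrict, LinearMap.ker_domRestrict, finrank_comap_subtype,
    inf_comm] at h

section States

variable {OK : Config N → Prop}

def extendByZero (ψ : AState N OK) (σ : Config N) : ℂ :=
  if h : OK σ then ψ ⟨σ, h⟩ else 0

theorem extendByZero_val (ψ : AState N OK) (σ : {σ : Config N // OK σ}) :
    extendByZero ψ σ.1 = ψ σ :=
  dif_pos σ.2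

theorem mem_gradeV_iff {f : ℕ} {ψ : AState N OK} :
    ψ ∈ gradeV N OK f ↔ IsHomogeneous (extendByZero ψ) f := by
  refine ⟨fun hψ σ hσ => ?_, fun hψ σ hσ => extendByZero_val ψ σ ▸ hψ σ.1 hσ⟩
  unfold extendByZero
  split_ifs with h
  exacts [hψ ⟨σ, h⟩ hσ, rfl]

theorem sum_ite_val_eq (F : {σ : Config N // OK σ} → ℂ) (ρ : Config N) :
    ∑ σ, (if σ.1 = ρ then F σ else 0) = if h : OK ρ then F ⟨ρ, h⟩ else 0 := by
  split_ifs with h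
  · rw [Fintype.sum_eq_single ⟨ρ, h⟩ fun σ hσ => if_neg fun e => hσ (Subtype.ext e),
      if_pos rfl]
  · exact sum_eq_zero fun σ _ => if_neg fun (e : σ.1 = ρ) => h (e ▸ σ.2)

theorem Qop_apply (ψ : AState N OK) (τ : {σ : Config N // OK σ}) :
    Qop N OK (fun _ => True) ψ τ = cubeQ (extendByZero ψ) τ.1 := by
  change (QmatA N OK (fun _ => True) fun _ _ => 1).mulVec ψ τ = _
  simp only [Matrix.mulVec, dotProduct, QmatA, true_and, one_mul, sum_mul, ite_mul, zero_mul,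
    update_true_eq_iff, cubeQ]
  rw [sum_comm]
  refine sum_congr rfl fun i _ => ?_
  by_cases hτ : τ.1 i = true
  · simp only [hτ, true_and, if_true, extendByZero, mul_dite, mul_zero]
    exact sum_ite_val_eq (fun σ => sgn σ.1 i * ψ σ) _
  · simp [hτ]

theorem Qop_mem_gradeV {f : ℕ} {ψ : AState N OK} (hψ : ψ ∈ gradeV N OK f) :
    Qop N OK (fun _ => True) ψ ∈ gradeV N OK (f + 1) := fun σ hσ => by
  rw [Qop_apply]
  exact isHomogeneous_cubeQ (mem_gradeV_iff.mp hψ) σ.1 hσ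

theorem cubeQ_extendByZero_comp_val (hOK : IsLowerSet {σ | OK σ}) (G : Config N → ℂ)
    {τ : Config N} (hτ : OK τ) :
    cubeQ (extendByZero (OK := OK) fun σ => G σ.1) τ = cubeQ G τ :=
  sum_congr rfl fun i _ => by
    rw [extendByZero, dif_pos (show OK (update τ i false) from
      hOK (update_le_self_iff.mpr (Bool.false_le _)) hτ)]

theorem Qop_Qop (hOK : IsLowerSet {σ | OK σ}) (ψ : AState N OK) :
    Qop N OK (fun _ => True) (Qop N OK (fun _ => True) ψ) = 0 := by
  funext τ
  rw [Qop_apply, funext (Qop_apply ψ), cubeQ_extendByZero_comp_val hOK _ τ.2, cubeQ_cubeQ]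
  rfl

variable [NeZero N] (OK) in
def contraction : AState N OK →ₗ[ℂ] AState N OK where
  toFun ψ σ := cubeH (extendByZero ψ) σ.1
  map_add' ψ φ := by
    funext σ
    simp only [cubeH, extendByZero, Pi.add_apply]
    split_ifs <;> simp
  map_smul' c ψ := by
    funext σ
    simp only [cubeH, extendByZero, Pi.smul_apply, smul_eq_mul, RingHom.id_apply]
    split_ifs <;> simp

theorem contraction_apply [NeZero N] (ψ : AState N OK) (σ : {σ : Config N // OK σ}) :
    contraction OK ψ σ = cubeH (extendByZero ψ) σ.1 :=
  rfl

theorem contraction_mem_gradeV [NeZero N] {f : ℕ} {ψ : AState N OK}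
    (hψ : ψ ∈ gradeV N OK f) : contraction OK ψ ∈ gradeV N OK (f - 1) :=
  fun σ hσ => isHomogeneous_cubeH (mem_gradeV_iff.mp hψ) σ.1 hσ

theorem finrank_gradeV (OK : Config N → Prop) (f : ℕ) :
    finrank ℂ (gradeV N OK f)
      = Fintype.card {σ : {σ : Config N // OK σ} // fermions σ.1 = f} := by
  let e : gradeV N OK f ≃ₗ[ℂ]
      ({σ : {σ : Config N // OK σ} // fermions σ.1 = f} → ℂ) :=
    { toFun ψ σ := ψ.1 σ.1
      map_add' _ _ := rfl
      map_smul' _ _ := rfl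
      invFun g :=
        ⟨fun σ => if h : fermions σ.1 = f then g ⟨σ, h⟩ else 0, fun _ h => dif_neg h⟩
      left_inv ψ := by
        ext σ
        by_cases h : fermions σ.1 = f
        · simp [h]
        · simp [h, ψ.2 σ h]
      right_inv g := by
        funext σ
        simp [σ.2] }
  rw [e.finrank_eq, finrank_fintype_fun_eq_card]

variable {S : Fin N → Prop} {f : ℕ}

theorem cohDim_add_finrank_inf :
    cohDim N OK S f + finrank ℂ ↥(cocycles N OK S f ⊓ cobounds N OK S f)
      = finrank ℂ (cocycles N OK S f) := by
  rw [cohDim, ← finrank_comap_subtype]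
  exact Submodule.finrank_quotient_add_finrank _

theorem cohDim_eq_zero_of_le (h : cocycles N OK S f ≤ cobounds N OK S f) :
    cohDim N OK S f = 0 := by
  have := cohDim_add_finrank_inf (N := N) (OK := OK) (S := S) (f := f)
  rw [inf_eq_left.mpr h] at this
  omega

theorem cobounds_succ (g : ℕ) :
    cobounds N OK S (g + 1) = (gradeV N OK g).map (Qop N OK S) :=
  rfl

theorem cocycles_zero_inf_cobounds_zero :
    cocycles N OK (fun _ => True) 0 ⊓ cobounds N OK (fun _ => True) 0 = ⊥ := by
  refine eq_bot_iff.mpr fun ψ ⟨⟨_, hψ₀⟩, φ, hφ, hψ₁⟩ =>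
    (Submodule.mem_bot ℂ).mpr (funext fun σ => ?_)
  subst hψ₁
  by_cases h : fermions σ.1 = 0
  · exact Qop_mem_gradeV hφ σ (by omega)
  · exact hψ₀ σ h

theorem cobounds_succ_le_cocycles_succ (hOK : IsLowerSet {σ | OK σ}) (g : ℕ) :
    cobounds N OK (fun _ => True) (g + 1) ≤ cocycles N OK (fun _ => True) (g + 1) := by
  rintro _ ⟨φ, hφ, rfl⟩
  exact ⟨Qop_Qop hOK φ, Qop_mem_gradeV hφ⟩

end States

def FermionsLE (N m : ℕ) (σ : Config N) : Prop :=
  fermions σ ≤ m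

section FermionsLE

variable {m f : ℕ}

theorem isLowerSet_fermionsLE : IsLowerSet {σ | FermionsLE N m σ} :=
  fun _ _ h hσ => (fermions_mono h).trans hσ

theorem extendByZero_comp_val_of_isHomogeneous {G : Config N → ℂ} (hG : IsHomogeneous G f)
    (hf : f ≤ m) : extendByZero (OK := FermionsLE N m) (fun σ => G σ.1) = G := by
  funext ρ
  unfold extendByZero
  split_ifs with h
  · rfl
  · exact (hG ρ fun e => h (show fermions ρ ≤ m by omega)).symm

theorem finrank_gradeV_fermionsLE (hf : f ≤ m) :
    finrank ℂ (gradeV N (FermionsLE N m) f) = N.choose f := by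
  rw [finrank_gradeV, ← card_fermions_eq]
  exact Fintype.card_congr <| Equiv.subtypeSubtypeEquivSubtype (p := FermionsLE N m)
    (q := fun σ => fermions σ = f) fun h => show fermions _ ≤ m by omega

theorem gradeV_fermionsLE_eq_bot (hf : m < f) : gradeV N (FermionsLE N m) f = ⊥ :=
  eq_bot_iff.mpr fun ψ hψ => (Submodule.mem_bot ℂ).mpr <| funext fun σ =>
    hψ σ fun h => by have : fermions σ.1 ≤ m := σ.2; omega

theorem cocycles_fermionsLE_self :
    cocycles N (FermionsLE N m) (fun _ => True) m = gradeV N (FermionsLE N m) m := by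
  refine le_antisymm inf_le_right fun ψ hψ => ⟨?_, hψ⟩
  have := Qop_mem_gradeV hψ
  rwa [gradeV_fermionsLE_eq_bot (lt_add_one m), Submodule.mem_bot] at this

theorem finrank_map_Qop_add_finrank_cocycles (hf : f ≤ m) :
    finrank ℂ ((gradeV N (FermionsLE N m) f).map (Qop N _ fun _ => True))
      + finrank ℂ (cocycles N (FermionsLE N m) (fun _ => True) f) = N.choose f := by
  rw [← finrank_gradeV_fermionsLE hf]
  exact finrank_map_add_finrank_ker_inf _ _

variable [NeZero N]

theorem Qop_contraction_add_contraction_Qop (hf : f < m) {ψ : AState N (FermionsLE N m)}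
    (hψ : ψ ∈ gradeV N (FermionsLE N m) f) :
    Qop N _ (fun _ => True) (contraction _ ψ) + contraction _ (Qop N _ (fun _ => True) ψ)
      = ψ := by
  have hG := mem_gradeV_iff.mp hψ
  funext σ
  rw [Pi.add_apply, Qop_apply, contraction_apply, funext (contraction_apply ψ),
    funext (Qop_apply ψ), cubeQ_extendByZero_comp_val isLowerSet_fermionsLE _ σ.2,
    extendByZero_comp_val_of_isHomogeneous (isHomogeneous_cubeQ hG) hf,
    cubeQ_cubeH_add_cubeH_cubeQ, extendByZero_val]

theorem cocycles_fermionsLE_le_cobounds (hf : f < m) :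
    cocycles N (FermionsLE N m) (fun _ => True) f
      ≤ cobounds N (FermionsLE N m) (fun _ => True) f := by
  rintro ψ ⟨hQψ, hψ⟩
  refine ⟨contraction _ ψ, contraction_mem_gradeV hψ, ?_⟩
  have := Qop_contraction_add_contraction_Qop hf hψ
  rwa [LinearMap.mem_ker.mp hQψ, map_zero, add_zero] at this

theorem finrank_map_Qop_gradeV_fermionsLE (hf : f < m) :
    finrank ℂ ((gradeV N (FermionsLE N m) f).map (Qop N _ fun _ => True))
      = (N - 1).choose f := by
  induction f with
  | zero =>
    have rank_nullity := finrank_map_Qop_add_finrank_cocycles (N := N) hf.le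
    have : cocycles N (FermionsLE N m) (fun _ => True) 0 = ⊥ := by
      rw [← cocycles_zero_inf_cobounds_zero, eq_comm, inf_eq_left]
      exact cocycles_fermionsLE_le_cobounds hf
    rw [this, finrank_bot] at rank_nullity
    simpa using rank_nullity
  | succ g ih =>
    have rank_nullity := finrank_map_Qop_add_finrank_cocycles (N := N) hf.le
    have hexact : cocycles N (FermionsLE N m) (fun _ => True) (g + 1)
        = (gradeV N _ g).map (Qop N _ _) :=
      le_antisymm (cocycles_fermionsLE_le_cobounds hf)
        (cobounds_succ_le_cocycles_succ isLowerSet_fermionsLE g)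
    rw [hexact, ih (by omega), Nat.choose_succ_right _ _ (NeZero.pos N)] at rank_nullity
    omega

theorem cohDim_fermionsLE (f : ℕ) :
    cohDim N (FermionsLE N m) (fun _ => True) f = if f = m then (N - 1).choose m else 0 := by
  rcases lt_trichotomy f m with hf | rfl | hf
  · rw [if_neg hf.ne]
    exact cohDim_eq_zero_of_le (cocycles_fermionsLE_le_cobounds hf)
  · have key := cohDim_add_finrank_inf (N := N) (OK := FermionsLE N f) (S := fun _ => True)
      (f := f)
    rw [if_pos rfl]
    cases f with
    | zero =>
      rw [cocycles_zero_inf_cobounds_zero, finrank_bot, cocycles_fermionsLE_self,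
        finrank_gradeV_fermionsLE le_rfl] at key
      simpa using key
    | succ g =>
      rw [inf_eq_right.mpr (cobounds_succ_le_cocycles_succ isLowerSet_fermionsLE g),
        cobounds_succ, finrank_map_Qop_gradeV_fermionsLE (lt_add_one g),
        cocycles_fermionsLE_self, finrank_gradeV_fermionsLE le_rfl,
        Nat.choose_succ_right _ _ (NeZero.pos N)] at key
      omega
  · rw [if_neg hf.ne']
    refine cohDim_eq_zero_of_le (le_trans ?_ bot_le)
    rw [← gradeV_fermionsLE_eq_bot hf]
    exact inf_le_right

end FermionsLE

theorem cyc_val (i k : Fin N) : cyc i k.val = i + k :=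
  Fin.ext (Fin.val_add i k).symm

theorem perOK_iff {ℓ : ℕ} (σ : Config N) :
    PerOK N ℓ σ ↔ ∀ i, ∃ k : Fin N, k.val ≤ ℓ ∧ σ (i + k) = false := by
  refine forall_congr' fun i =>
    ⟨fun ⟨k, hk, hσ⟩ => ?_, fun ⟨k, hk, hσ⟩ => ⟨k.val, hk, cyc_val i k ▸ hσ⟩⟩
  refine ⟨⟨k % N, Nat.mod_lt _ i.pos⟩, (Nat.mod_le k N).trans hk, ?_⟩
  convert hσ using 2
  exact Fin.ext (by simp [cyc, Fin.val_add])

theorem perOK_eq_fermionsLE_of_le [NeZero N] {ℓ : ℕ} (hN : N ≤ ℓ + 1) :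
    PerOK N ℓ = FermionsLE N (N - 1) := by
  funext σ
  have hcount := fermions_add_card_empty σ
  rw [perOK_iff, FermionsLE, eq_iff_iff]
  constructor
  · intro h
    obtain ⟨k, -, hk⟩ := h 0
    have : 0 < #{j | σ j = false} := card_pos.mpr ⟨k, by simpa using hk⟩
    omega
  · intro h i
    obtain ⟨j, hj⟩ : ({j | σ j = false} : Finset (Fin N)).Nonempty :=
      card_pos.mp (by have := i.pos; omega)
    exact ⟨j - i, by have := (j - i).isLt; omega, by simpa using hj⟩

theorem perOK_eq_fermionsLE_of_eq_add_two (ℓ : ℕ) :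
    PerOK (ℓ + 2) ℓ = FermionsLE (ℓ + 2) ℓ := by
  funext σ
  have hcount := fermions_add_card_empty σ
  rw [perOK_iff, FermionsLE, eq_iff_iff]
  constructor
  · intro h
    obtain ⟨j, -, hj⟩ := h 0
    rw [zero_add] at hj
    obtain ⟨k, hk, hjk⟩ := h (j + 1)
    have hne : j + 1 + k ≠ j := by
      rw [add_assoc, Ne, add_eq_left, Fin.ext_iff, Fin.val_add, Fin.val_one, Fin.val_zero,
        Nat.mod_eq_of_lt (by omega)]
      omega
    have : 1 < #{j | σ j = false} :=
      one_lt_card_iff.mpr ⟨_, _, by simpa using hjk, by simpa using hj, hne⟩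
    omega
  · intro h i
    obtain ⟨j₁, j₂, h₁, h₂, hne⟩ :=
      one_lt_card_iff.mp (show 1 < #{j | σ j = false} by omega)
    simp only [mem_filter, mem_univ, true_and] at h₁ h₂
    -- the offsets of `j₁` and `j₂` from `i` are distinct, so one of them is not `ℓ + 1`
    by_cases hk : (j₁ - i).val ≤ ℓ
    · exact ⟨j₁ - i, hk, by rwa [add_sub_cancel]⟩
    · refine ⟨j₂ - i, ?_, by rwa [add_sub_cancel]⟩
      have := Fin.val_ne_of_ne fun (e : j₁ - i = j₂ - i) => hne (sub_left_inj.mp e)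
      have := (j₁ - i).isLt
      have := (j₂ - i).isLt
      omega

theorem cohomology_periodic_short_chain_general (ℓ N : ℕ) :
    (1 ≤ N → N ≤ ℓ + 1 →
      ∀ f, cohDim N (PerOK N ℓ) (fun _ => True) f = if f = N - 1 then 1 else 0) ∧
    (N = ℓ + 2 →
      ∀ f, cohDim N (PerOK N ℓ) (fun _ => True) f =
        if f = ℓ then ℓ + 1 else 0) := by
  refine ⟨fun hN hNℓ f => ?_, fun hN f => ?_⟩
  · have : NeZero N := ⟨by omega⟩
    rw [perOK_eq_fermionsLE_of_le hNℓ, cohDim_fermionsLE, Nat.choose_self]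
  · subst hN
    rw [perOK_eq_fermionsLE_of_eq_add_two, cohDim_fermionsLE,
      show ℓ + 2 - 1 = ℓ + 1 from rfl, Nat.choose_succ_self_right]

/-- Cohomology of short closed chains with periodic boundary conditions: for
`1 ≤ N ≤ ℓ+1` it is one-dimensional, concentrated at fermion number `N-1`; for
`N = ℓ+2` it is `(ℓ+1)`-dimensional, concentrated at fermion number `ℓ`. -/
theorem cohomology_periodic_short_chain (ℓ N : ℕ) (hℓ : 1 ≤ ℓ) :
    (1 ≤ N → N ≤ ℓ + 1 →
      ∀ f, cohDim N (PerOK N ℓ) (fun _ => True) f = if f = N - 1 then 1 else 0) ∧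
    (N = ℓ + 2 →
      ∀ f, cohDim N (PerOK N ℓ) (fun _ => True) f =
        if f = ℓ then ℓ + 1 else 0) :=
  cohomology_periodic_short_chain_general ℓ N

end
end
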